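/- Let Q be a finite quiver, 𝓥 = (V_x) a family of finite-dimensional complex vector spaces with dim V_x = n_x, and p a nonzero semi-invariant polynomial of weight σ on the representation space. Suppose α is a dimension vector with α ≤ n componentwise such that every representation r can be transformed by the group action to a representation of parabolic type α (i.e. preserving a fixed family of subspaces S_x ⊆ V_x with dim S_x = α_x). Then ∑_x σ_x α_x ≤ 0. -/
import Mathlib

open Finset in
private lemma stmt9_prod_zpow {G : Type*} [CommGroup G] {ι : Type*} (u : G) (s : Finset ι)
    (f : ι → ℤ) : ∏ i ∈ s, u ^ f i = u ^ (∑ i ∈ s, f i) := by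
  induction s using Finset.cons_induction with
  | empty => simp
  | cons a s h ih => simp [Finset.prod_cons, Finset.sum_cons, ih, zpow_add]

private lemma stmt9_det_diag (N k : ℕ) (hk : k ≤ N) (u : ℂ) :
    (Matrix.diagonal (fun i : Fin N => if (i : ℕ) < k then u else 1)).det = u ^ k := by
  rw [Matrix.det_diagonal]
  rw [Fin.prod_univ_eq_prod_range (fun m : ℕ => if m < k then u else 1) N,
    ← Finset.prod_filter]
  have h2 : (Finset.range N).filter (· < k) = Finset.range k := by
    rw [Finset.range_eq_Ico, Finset.Ico_filter_lt, min_eq_right hk, ← Finset.range_eq_Ico]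
  rw [h2, Finset.prod_const, Finset.card_range]

/-- Let `Q` be a finite quiver, `n` a dimension vector (rep space realized by matrices),
and `p` a nonzero polynomial function on the representation space, semi-invariant of
weight `σ`. Suppose `α ≤ n` is a dimension vector such that every representation `r` can
be moved by the group action to a representation of parabolic type `α`, i.e. one
preserving the fixed coordinate subspaces spanned by the first `α_x` basis vectors
(block upper-triangular form: the entries with row index `≥ α_{t a}` and column index
`< α_{s a}` vanish). Then `∑_x σ_x α_x ≤ 0`. -/
theorem stmt9 (V Ar : Type) [Fintype V] [Fintype Ar] (s t : Ar → V) (n : V → ℕ)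
    (σ : V → ℤ)
    (P : MvPolynomial ((a : Ar) × (Fin (n (t a)) × Fin (n (s a)))) ℂ)
    (p : (∀ a : Ar, Matrix (Fin (n (t a))) (Fin (n (s a))) ℂ) → ℂ)
    (hp : ∀ r, p r = MvPolynomial.eval (fun i => r i.1 i.2.1 i.2.2) P)
    (hsemi : ∀ (g : ∀ x, GL (Fin (n x)) ℂ) r,
      p (fun a => (g (t a) : Matrix (Fin (n (t a))) (Fin (n (t a))) ℂ) * r a *
          (((g (s a))⁻¹ : GL (Fin (n (s a))) ℂ) : Matrix (Fin (n (s a))) (Fin (n (s a))) ℂ)) =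
        (∏ x, ((g x : Matrix (Fin (n x)) (Fin (n x)) ℂ).det) ^ (-(σ x))) * p r)
    (hne : p ≠ 0)
    (α : V → ℕ) (hα : ∀ x, α x ≤ n x)
    (hpar : ∀ r : ∀ a : Ar, Matrix (Fin (n (t a))) (Fin (n (s a))) ℂ,
      ∃ g : ∀ x, GL (Fin (n x)) ℂ, ∀ (a : Ar) (i : Fin (n (t a))) (j : Fin (n (s a))),
        α (t a) ≤ (i : ℕ) → (j : ℕ) < α (s a) →
        ((g (t a) : Matrix (Fin (n (t a))) (Fin (n (t a))) ℂ) * r a *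
          (((g (s a))⁻¹ : GL (Fin (n (s a))) ℂ) : Matrix (Fin (n (s a))) (Fin (n (s a))) ℂ)) i j = 0) :
    ∑ x, σ x * (α x : ℤ) ≤ 0 := by
  classical
  -- a point where `p` does not vanish
  obtain ⟨r₀, hr₀⟩ : ∃ r, p r ≠ 0 := by
    by_contra h; push_neg at h; exact hne (funext h)
  obtain ⟨g₀, hg₀⟩ := hpar r₀
  have hdetne : ∀ g : ∀ x, GL (Fin (n x)) ℂ,
      (∏ x, ((g x : Matrix (Fin (n x)) (Fin (n x)) ℂ).det) ^ (-(σ x))) ≠ 0 := by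
    intro g
    refine Finset.prod_ne_zero_iff.mpr fun x _ => zpow_ne_zero _ ?_
    exact ((Matrix.isUnit_iff_isUnit_det _).mp (g x).isUnit).ne_zero
  -- a parabolic point where `p` does not vanish
  obtain ⟨r, hpr, hrpar⟩ : ∃ r : (∀ a : Ar, Matrix (Fin (n (t a))) (Fin (n (s a))) ℂ),
      p r ≠ 0 ∧ (∀ (a : Ar) (i : Fin (n (t a))) (j : Fin (n (s a))),
        α (t a) ≤ (i : ℕ) → (j : ℕ) < α (s a) → r a i j = 0) := by
    refine ⟨_, ?_, hg₀⟩
    rw [hsemi g₀ r₀]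
    exact mul_ne_zero (hdetne g₀) hr₀
  by_contra hm
  push_neg at hm
  set m : ℤ := ∑ x, σ x * (α x : ℤ) with hmdef
  set M : ℕ := m.toNat with hMdef
  have hMm : (M : ℤ) = m := Int.toNat_of_nonneg hm.le
  have hM1 : 1 ≤ M := by omega
  -- the one-variable polynomial obtained by substituting the 1-parameter subgroup
  set q : ((a : Ar) × (Fin (n (t a)) × Fin (n (s a)))) → Polynomial ℂ :=
    fun v => if (v.2.1 : ℕ) < α (t v.1)
      then (if (v.2.2 : ℕ) < α (s v.1) then Polynomial.C (r v.1 v.2.1 v.2.2)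
            else Polynomial.C (r v.1 v.2.1 v.2.2) * Polynomial.X)
      else (if (v.2.2 : ℕ) < α (s v.1) then 0 else Polynomial.C (r v.1 v.2.1 v.2.2)) with hq
  set F : Polynomial ℂ := MvPolynomial.aeval q P with hF
  have keyF : ∀ u : ℂˣ, F.eval (u : ℂ) * (u : ℂ) ^ M = p r := by
    intro u
    -- the 1-parameter subgroup
    have hde : ∀ x : V,
        Matrix.diagonal (fun i : Fin (n x) => if (i : ℕ) < α x then (u : ℂ) else 1) *
          Matrix.diagonal (fun i : Fin (n x) => if (i : ℕ) < α x then ((u⁻¹ : ℂˣ) : ℂ) else 1)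
          = 1 := by
      intro x
      have hfun : (fun i : Fin (n x) => (if (i : ℕ) < α x then (u : ℂ) else 1) *
          (if (i : ℕ) < α x then ((u⁻¹ : ℂˣ) : ℂ) else 1)) = fun _ => (1 : ℂ) := by
        funext i
        split_ifs with h
        · exact Units.mul_inv u
        · exact one_mul 1
      rw [Matrix.diagonal_mul_diagonal, hfun, Matrix.diagonal_one]
    have hed : ∀ x : V,
        Matrix.diagonal (fun i : Fin (n x) => if (i : ℕ) < α x then ((u⁻¹ : ℂˣ) : ℂ) else 1) *
          Matrix.diagonal (fun i : Fin (n x) => if (i : ℕ) < α x then (u : ℂ) else 1)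
          = 1 := by
      intro x
      have hfun : (fun i : Fin (n x) => (if (i : ℕ) < α x then ((u⁻¹ : ℂˣ) : ℂ) else 1) *
          (if (i : ℕ) < α x then (u : ℂ) else 1)) = fun _ => (1 : ℂ) := by
        funext i
        split_ifs with h
        · exact Units.inv_mul u
        · exact one_mul 1
      rw [Matrix.diagonal_mul_diagonal, hfun, Matrix.diagonal_one]
    set g : ∀ x, GL (Fin (n x)) ℂ := fun x =>
      ⟨Matrix.diagonal (fun i : Fin (n x) => if (i : ℕ) < α x then (u : ℂ) else 1),
       Matrix.diagonal (fun i : Fin (n x) => if (i : ℕ) < α x then ((u⁻¹ : ℂˣ) : ℂ) else 1),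
       hde x, hed x⟩ with hg
    have hsem := hsemi g r
    -- identify the left side with the evaluation of F
    have hinv : ∀ x, (((g x)⁻¹ : GL (Fin (n x)) ℂ) : Matrix (Fin (n x)) (Fin (n x)) ℂ)
        = Matrix.diagonal (fun i : Fin (n x) => if (i : ℕ) < α x then ((u⁻¹ : ℂˣ) : ℂ) else 1) := by
      intro x; rw [hg]; rfl
    have hentry : (fun v : ((a : Ar) × (Fin (n (t a)) × Fin (n (s a)))) =>
        ((g (t v.1) : Matrix (Fin (n (t v.1))) (Fin (n (t v.1))) ℂ) * r v.1 *
          (((g (s v.1))⁻¹ : GL (Fin (n (s v.1))) ℂ) :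
            Matrix (Fin (n (s v.1))) (Fin (n (s v.1))) ℂ)) v.2.1 v.2.2)
        = fun v => (q v).eval (u : ℂ) := by
      funext v
      obtain ⟨a, i, j⟩ := v
      rw [hinv]
      simp only [hg, Units.val_mk]
      rw [Matrix.mul_diagonal, Matrix.diagonal_mul, hq]
      simp only
      split_ifs with h1 h2 h2
      · simp only [Polynomial.eval_C]
        rw [mul_comm (u : ℂ) (r a i j), mul_assoc, Units.mul_inv, mul_one]
      · simp only [Polynomial.eval_mul, Polynomial.eval_C, Polynomial.eval_X]
        rw [mul_one, mul_comm]
      · rw [hrpar a i j (Nat.le_of_not_lt h1) h2]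
        simp
      · simp
    have hlhs : p (fun a => (g (t a) : Matrix (Fin (n (t a))) (Fin (n (t a))) ℂ) * r a *
          (((g (s a))⁻¹ : GL (Fin (n (s a))) ℂ) : Matrix (Fin (n (s a))) (Fin (n (s a))) ℂ))
        = F.eval (u : ℂ) := by
      rw [hp]
      rw [hF, MvPolynomial.aeval_def, Polynomial.algebraMap_eq]
      have hcomp := MvPolynomial.eval₂_comp_left (Polynomial.evalRingHom (u : ℂ))
        (Polynomial.C : ℂ →+* Polynomial ℂ) q P
      have hid : (Polynomial.evalRingHom (u : ℂ)).comp (Polynomial.C : ℂ →+* Polynomial ℂ)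
          = RingHom.id ℂ := by
        ext x; simp
      rw [hid] at hcomp
      have : Polynomial.eval (u : ℂ) (MvPolynomial.eval₂ Polynomial.C q P)
          = MvPolynomial.eval₂ (RingHom.id ℂ) (fun v => (q v).eval (u : ℂ)) P := hcomp
      rw [this, ← hentry]
      rfl
    -- compute the determinant factor
    have hdet : (∏ x, ((g x : Matrix (Fin (n x)) (Fin (n x)) ℂ).det) ^ (-(σ x)))
        = ((u ^ (-m) : ℂˣ) : ℂ) := by
      have hdx : ∀ x, ((g x : Matrix (Fin (n x)) (Fin (n x)) ℂ).det) ^ (-(σ x))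
          = (((u ^ (α x)) ^ (-(σ x)) : ℂˣ) : ℂ) := by
        intro x
        rw [hg]
        show (Matrix.diagonal _).det ^ (-(σ x)) = _
        rw [stmt9_det_diag (n x) (α x) (hα x) (u : ℂ)]
        rw [← Units.val_pow_eq_pow_val, ← Units.val_zpow_eq_zpow_val]
      rw [Finset.prod_congr rfl (fun x _ => hdx x)]
      rw [show (∏ x : V, (((u ^ (α x)) ^ (-(σ x)) : ℂˣ) : ℂ))
          = ((∏ x : V, (u ^ (α x)) ^ (-(σ x)) : ℂˣ) : ℂ) from
        (map_prod (Units.coeHom ℂ) _ _).symm]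
      congr 1
      calc ∏ x, (u ^ (α x)) ^ (-(σ x))
          = ∏ x, u ^ ((α x : ℤ) * (-(σ x))) := by
            refine Finset.prod_congr rfl fun x _ => ?_
            rw [zpow_mul, zpow_natCast]
        _ = u ^ (∑ x, (α x : ℤ) * (-(σ x))) := stmt9_prod_zpow u _ _
        _ = u ^ (-m) := by
            congr 1
            rw [hmdef, ← Finset.sum_neg_distrib]
            exact Finset.sum_congr rfl fun x _ => by ring
    rw [hlhs, hdet] at hsem
    rw [hsem]
    have : ((u : ℂ)) ^ M = ((u ^ (M : ℤ) : ℂˣ) : ℂ) := by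
      rw [zpow_natCast, Units.val_pow_eq_pow_val]
    rw [this, mul_right_comm, ← Units.val_mul, ← zpow_add, hMm, neg_add_cancel, zpow_zero,
      Units.val_one, one_mul]
  -- F * X^M - C (p r) vanishes away from 0, hence is zero; evaluate at 0
  set G : Polynomial ℂ := F * Polynomial.X ^ M - Polynomial.C (p r) with hG
  have hGroot : ∀ z : ℂ, z ≠ 0 → G.IsRoot z := by
    intro z hz
    have := keyF (Units.mk0 z hz)
    simp only [Units.val_mk0] at this
    simp [hG, Polynomial.IsRoot, this]
  have hGzero : G = 0 := by
    apply Polynomial.eq_zero_of_infinite_isRoot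
    apply Set.Infinite.mono (s := {(0 : ℂ)}ᶜ)
    · intro z hz
      exact hGroot z hz
    · exact (Set.finite_singleton (0 : ℂ)).infinite_compl
  have h0 : G.eval 0 = 0 := by rw [hGzero]; simp
  rw [hG] at h0
  simp only [Polynomial.eval_sub, Polynomial.eval_mul, Polynomial.eval_pow,
    Polynomial.eval_X, Polynomial.eval_C] at h0
  rw [zero_pow (by omega : M ≠ 0), mul_zero, zero_sub, neg_eq_zero] at h0
  exact hpr h0
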